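/- arXiv:0709.4273 — 3 statements merged into one kernel-verified Lean document; each statement's English description precedes it below -/
import Mathlib

section
/- The set-matrix multiplication defined by (AB)_{ij} = ⋂_{μ} (a_{iμ} ∪ b_{μj}) for i ≠ j and (AB)_{ij} = V (the universal set) for i = j is not associative: there exist 2×2 set matrices A, B and a 2×1 set matrix C over a universal set V with at least three distinct elements such that (AB)C ≠ A(BC). -/
/-! With `A = B = ∅` and `C = ({a}, ∅)ᵀ`, the diagonal rule makes `AB` the matrix with `V` on
the diagonal, so `((AB)C)₁₀ = (∅ ∪ C₀₀) ∩ (V ∪ C₁₀) = {a}`. On the other side the entry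
`(BC)₁₀ = C₀₀ ∩ C₁₀` is empty, hence so is `(A(BC))₁₀ = (BC)₀₀ ∩ (BC)₁₀`. -/

open Set

/-- Set-matrix multiplication: `(A * B) i j = ⋂ μ, A i μ ∪ B μ j` for `i ≠ j`
(indices compared as natural numbers), and the universal set on the diagonal. -/
def smul {α : Type*} {n m k : ℕ} (A : Fin n → Fin m → Set α)
    (B : Fin m → Fin k → Set α) : Fin n → Fin k → Set α :=
  fun i j => {x | (i : ℕ) ≠ (j : ℕ) → x ∈ ⋂ μ, A i μ ∪ B μ j}

theorem Set.iInter_fin_two {α : Type*} (s : Fin 2 → Set α) : ⋂ i, s i = s 0 ∩ s 1 := by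
  ext x
  simp only [mem_iInter, Fin.forall_fin_two, mem_inter_iff]

section

variable {α : Type*} {n m k : ℕ} (A : Fin n → Fin m → Set α) (B : Fin m → Fin k → Set α)
  {i : Fin n} {j : Fin k}

theorem smul_apply_of_val_eq (h : (i : ℕ) = j) : smul A B i j = univ :=
  eq_univ_of_forall fun _ hne => absurd h hne

theorem smul_apply_of_val_ne (h : (i : ℕ) ≠ j) : smul A B i j = ⋂ μ, A i μ ∪ B μ j := by
  ext x
  exact ⟨fun hx => hx h, fun hx _ => hx⟩

end

section

variable {α : Type*} (a : α)

def emptyMatrix (n m : ℕ) : Fin n → Fin m → Set α := fun _ _ => ∅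

def singletonColumn : Fin 2 → Fin 1 → Set α := fun i _ => if i = 0 then {a} else ∅

theorem smul_smul_emptyMatrix_singletonColumn :
    smul (smul (emptyMatrix 2 2) (emptyMatrix 2 2)) (singletonColumn a) 1 0 = {a} := by
  rw [smul_apply_of_val_ne _ _ (by decide), iInter_fin_two,
    smul_apply_of_val_ne _ _ (by decide), iInter_fin_two, smul_apply_of_val_eq _ _ rfl]
  simp [emptyMatrix, singletonColumn]

theorem emptyMatrix_smul_smul_singletonColumn :
    smul (emptyMatrix 2 2) (smul (emptyMatrix 2 2) (singletonColumn a)) 1 0 = ∅ := by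
  rw [smul_apply_of_val_ne _ _ (by decide), iInter_fin_two,
    smul_apply_of_val_ne (i := 1) _ _ (by decide), iInter_fin_two]
  simp [emptyMatrix, singletonColumn]

end

theorem smul_not_associative_general {α : Type*} (a : α) :
    ∃ (A B : Fin 2 → Fin 2 → Set α) (C : Fin 2 → Fin 1 → Set α),
      smul (smul A B) C ≠ smul A (smul B C) := by
  refine ⟨emptyMatrix 2 2, emptyMatrix 2 2, singletonColumn a, fun h => ?_⟩
  have h₁₀ := congrFun (congrFun h 1) 0
  rw [smul_smul_emptyMatrix_singletonColumn, emptyMatrix_smul_smul_singletonColumn] at h₁₀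
  exact singleton_ne_empty a h₁₀

/-- The set-matrix multiplication is not associative: over any universal set with at
least three distinct elements there are 2×2 set matrices `A`, `B` and a 2×1 set
matrix `C` with `(AB)C ≠ A(BC)`. -/
theorem smul_not_associative {α : Type*} (a b c : α)
    (hab : a ≠ b) (hac : a ≠ c) (hbc : b ≠ c) :
    ∃ (A B : Fin 2 → Fin 2 → Set α) (C : Fin 2 → Fin 1 → Set α),
      smul (smul A B) C ≠ smul A (smul B C) :=
  smul_not_associative_general a
end

section
/- In the digraph g, if there exists a k-path from vertex v_i to vertex v_j, then the entry (T^k)_{ij} of the k-th right power of the adjacency set matrix T is not equal to V; moreover (T^k)_{ij} ⊆ V \ {v_i}. -/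
open Set

/-- Adjacency set matrix `T`: `T i j = {v_j}` if `(v_i,v_j)` is an arc and `i ≠ j`,
and `T i j = V` (the universal set) otherwise. -/
def Tmat (n : ℕ) (A : Fin n → Fin n → Prop) (i j : Fin n) : Set (Fin n) :=
  {x | (A i j ∧ i ≠ j) → x = j}

/-- Right powers of `T`: `Tpow n A k` is the `(k+1)`-st right power `T^(k+1)`. -/
def Tpow (n : ℕ) (A : Fin n → Fin n → Prop) : ℕ → Fin n → Fin n → Set (Fin n)
  | 0 => Tmat n A
  | k + 1 => fun i j => {x | i ≠ j → x ∈ ⋂ μ, Tpow n A k i μ ∪ Tmat n A μ j}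

/-- Start-vertex adjacency set matrix `R`. -/
def Rmat (n : ℕ) (A : Fin n → Fin n → Prop) (i j : Fin n) : Set (Fin n) :=
  {x | (A i j ∧ i ≠ j) → x = i}

/-- A `k`-path from `i` to `j`: `k+1` pairwise distinct vertices from `i` to `j`
following arcs of the digraph. -/
def IsPath (n : ℕ) (A : Fin n → Fin n → Prop) (k : ℕ) (i j : Fin n) : Prop :=
  ∃ w : Fin (k + 1) → Fin n, w 0 = i ∧ w (Fin.last k) = j ∧ Function.Injective w ∧
    ∀ x : Fin k, A (w x.castSucc) (w x.succ)

/-- A `k`-cycle through `i`: a closed arc-walk of length `k` at `i` whose first `k`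
vertices are pairwise distinct. -/
def IsCycle (n : ℕ) (A : Fin n → Fin n → Prop) (k : ℕ) (i : Fin n) : Prop :=
  ∃ w : Fin (k + 1) → Fin n, w 0 = i ∧ w (Fin.last k) = i ∧
    Function.Injective (fun x : Fin k => w x.castSucc) ∧
    ∀ x : Fin k, A (w x.castSucc) (w x.succ)

namespace IsPath

variable {n : ℕ} {A : Fin n → Fin n → Prop} {k : ℕ} {i j : Fin n}

theorem eq_of_zero (h : IsPath n A 0 i j) : i = j := by
  obtain ⟨w, hw0, hwl, -, -⟩ := h
  exact hw0.symm.trans hwl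

theorem ne_of_pos (h : IsPath n A k i j) (hk : 0 < k) : i ≠ j := by
  obtain ⟨w, rfl, rfl, hinj, -⟩ := h
  exact hinj.ne (Fin.ext_iff.not.mpr (by simp only [Fin.val_zero, Fin.val_last]; omega))

theorem exists_dropLast (h : IsPath n A (k + 1) i j) :
    ∃ μ, IsPath n A k i μ ∧ A μ j ∧ μ ≠ j := by
  obtain ⟨w, rfl, rfl, hinj, harc⟩ := h
  refine ⟨w (Fin.last k).castSucc, ⟨w ∘ Fin.castSucc, rfl, rfl,
    hinj.comp (Fin.castSucc_injective _), fun x => harc x.castSucc⟩,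
    harc (Fin.last k), hinj.ne (Fin.castSucc_lt_last _).ne⟩

end IsPath

theorem Tmat_eq_singleton {n : ℕ} {A : Fin n → Fin n → Prop} {i j : Fin n}
    (hA : A i j) (hij : i ≠ j) : Tmat n A i j = {j} := by
  ext x
  simp [Tmat, hA, hij]

theorem mem_Tpow_succ {n : ℕ} {A : Fin n → Fin n → Prop} {k : ℕ} {i j x : Fin n} :
    x ∈ Tpow n A (k + 1) i j ↔ (i ≠ j → ∀ μ, x ∈ Tpow n A k i μ ∪ Tmat n A μ j) := by
  simp [Tpow]

/-- Along a path `i = w₀ → ⋯ → w_{k+1} = j`, the last arc `w_k → j` makes `T_{w_k j} = {j} ∌ i`,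
so `i` can only survive the intersection defining `(T^{k+1})_{ij}` through `(T^k)_{i w_k}`. -/
theorem notMem_Tpow_of_isPath {n : ℕ} {A : Fin n → Fin n → Prop} :
    ∀ {k : ℕ} {i j : Fin n}, IsPath n A (k + 1) i j → i ∉ Tpow n A k i j
  | 0, i, j, h => by
    obtain ⟨μ, hiμ, hA, hμj⟩ := h.exists_dropLast
    obtain rfl := hiμ.eq_of_zero
    simp [Tpow, Tmat_eq_singleton hA hμj, hμj]
  | k + 1, i, j, h => by
    obtain ⟨μ, hiμ, hA, hμj⟩ := h.exists_dropLast
    have hij : i ≠ j := h.ne_of_pos (Nat.succ_pos _)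
    intro hmem
    rcases mem_Tpow_succ.mp hmem hij μ with hμ | hμ
    · exact notMem_Tpow_of_isPath hiμ hμ
    · exact hij (by rwa [Tmat_eq_singleton hA hμj] at hμ)

/-- Lemma 3: if there is a `k`-path from `v_i` to `v_j` then `(T^k)_{ij} ≠ V`;
moreover `(T^k)_{ij} ⊆ V \ {v_i}`. -/
theorem Tpow_ne_univ_of_path (n : ℕ) (A : Fin n → Fin n → Prop) (k : ℕ)
    (hk : 1 ≤ k) (i j : Fin n) (h : IsPath n A k i j) :
    Tpow n A (k - 1) i j ≠ Set.univ ∧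
      Tpow n A (k - 1) i j ⊆ Set.univ \ {i} := by
  obtain ⟨m, rfl⟩ : ∃ m, k = m + 1 := ⟨k - 1, by omega⟩
  have hi : i ∉ Tpow n A m i j := notMem_Tpow_of_isPath h
  exact ⟨fun huniv => hi (huniv ▸ Set.mem_univ i),
    Set.subset_sdiff_singleton (Set.subset_univ _) hi⟩
end

section
/- In the complete digraph on n vertices (with an arc between every ordered pair of distinct vertices and no loops), for all 1 ≤ k ≤ n−1 and all i ≠ j, the entry (T^k)_{ij} of the k-th right power of the adjacency set matrix satisfies (T^k)_{ij} ≠ V; in particular (T^{n−1})_{ij} ≠ V for all i ≠ j, reflecting that the complete digraph has a Hamiltonian path between every ordered pair of distinct vertices. -/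
open Set

/-! The start vertex `i` is never in `(T^k)_{ij}`. For `k = 1` this is the arc `i → j`;
to pass from `k` to `k + 1`, route through a third vertex `μ ∉ {i, j}` (it exists because
`k + 1 ≤ n - 1`): by induction `i ∉ (T^k)_{iμ}`, and the arc `μ → j` gives `i ∉ T_{μj}`. -/

section

variable {n : ℕ} {A : Fin n → Fin n → Prop}

theorem notMem_Tmat {x i j : Fin n} (hA : A i j) (hij : i ≠ j) (hx : x ≠ j) :
    x ∉ Tmat n A i j :=
  fun h => hx (h ⟨hA, hij⟩)

theorem notMem_Tpow_succ {m : ℕ} {x i μ j : Fin n} (hij : i ≠ j)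
    (hx : x ∉ Tpow n A m i μ) (hA : A μ j) (hμj : μ ≠ j) (hxj : x ≠ j) :
    x ∉ Tpow n A (m + 1) i j :=
  fun h => (mem_iInter.mp (h hij) μ).elim hx (notMem_Tmat hA hμj hxj)

end

theorem start_notMem_Tpow_complete {n m : ℕ} (hm : m ≤ n - 2) {i j : Fin n} (hij : i ≠ j) :
    i ∉ Tpow n (fun a b : Fin n => a ≠ b) m i j := by
  induction m generalizing j with
  | zero => exact notMem_Tmat hij hij hij
  | succ m ih =>
    obtain ⟨μ, hμi, hμj⟩ := Fin.exists_ne_and_ne_of_two_lt i j (by omega)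
    exact notMem_Tpow_succ hij (ih (by omega) hμi.symm) hμj hμj hij

theorem complete_Tpow_ne_univ_general (n : ℕ) (k : ℕ)
    (hk : k ≤ n - 1) (i j : Fin n) (hij : i ≠ j) :
    Tpow n (fun a b : Fin n => a ≠ b) (k - 1) i j ≠ Set.univ :=
  fun h => start_notMem_Tpow_complete (by omega) hij (h ▸ mem_univ i)

/-- In the complete digraph on `n ≥ 2` vertices (arcs between all ordered pairs of
distinct vertices, no loops), `(T^k)_{ij} ≠ V` for all `1 ≤ k ≤ n-1` and `i ≠ j`;
in particular `(T^{n-1})_{ij} ≠ V` for all `i ≠ j`. -/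
theorem complete_Tpow_ne_univ (n : ℕ) (hn : 2 ≤ n) (k : ℕ)
    (hk1 : 1 ≤ k) (hk : k ≤ n - 1) (i j : Fin n) (hij : i ≠ j) :
    Tpow n (fun a b : Fin n => a ≠ b) (k - 1) i j ≠ Set.univ :=
  complete_Tpow_ne_univ_general n k hk i j hij
end
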